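/- arXiv:1401.7541 — 7 statements merged into one kernel-verified Lean document; each statement's English description precedes it below -/
import Mathlib

section
/- Let X be a nonempty set and let u : X → ℂ be a function. Suppose there exist a Hilbert space H and bounded maps P, Q : X → H with sup_x ‖P(x)‖ ≤ C₁ and sup_y ‖Q(y)‖ ≤ C₂, such that for a group G = X with group structure, u(y⁻¹x) = ⟨P(x), Q(y)⟩ for all x, y. Then for every n and all x₁,…,xₙ ∈ G, the n×n matrix [u(xⱼ⁻¹xᵢ)] defines a Schur multiplication operator on n×n matrices whose operator norm (as a map on bounded operators on ℂⁿ with Schur/entrywise product) is at most C₁·C₂. -/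
/-!
Expanding `⟪p i, q j⟫` in an orthonormal basis `(b m)` of the finite-dimensional span of the
vectors involved writes the Schur product `[⟪p i, q j⟫ * A i j]` as `∑ m, D(a m) * A * D(c m)`
with diagonal matrices, `a m i = ⟪p i, b m⟫` and `c m j = ⟪b m, q j⟫`. Pairing with `η, ξ` gives
`∑ m, ⟪D(a m)ᴴ η, A (D(c m) ξ)⟫`, and Cauchy–Schwarz over `m` bounds it by
`‖A‖ * (∑ i, |η i|² ‖p i‖²)^(1/2) * (∑ j, |ξ j|² ‖q j‖²)^(1/2) ≤ C₁ * C₂ * ‖A‖ * ‖η‖ * ‖ξ‖`,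
because `∑ m, |a m i|² = ‖p i‖²` by Parseval.
-/

open Matrix
open scoped InnerProductSpace

theorem ContinuousLinearMap.opNorm_le_of_norm_inner_le {𝕜 E F : Type*} [RCLike 𝕜]
    [NormedAddCommGroup E] [InnerProductSpace 𝕜 E] [NormedAddCommGroup F] [InnerProductSpace 𝕜 F]
    {T : E →L[𝕜] F} {C : ℝ} (hC : 0 ≤ C) (h : ∀ x y, ‖⟪y, T x⟫_𝕜‖ ≤ C * ‖x‖ * ‖y‖) :
    ‖T‖ ≤ C :=
  opNorm_le_of_re_inner_le hC fun x y hx hy => by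
    calc RCLike.re ⟪T x, y⟫_𝕜 ≤ ‖⟪T x, y⟫_𝕜‖ := RCLike.re_le_norm _
      _ = ‖⟪y, T x⟫_𝕜‖ := norm_inner_symm _ _
      _ ≤ C := by simpa [hx, hy] using h x y

namespace Matrix

variable {ι κ : Type*} [Fintype ι] [DecidableEq ι] [Fintype κ]

theorem norm_toEuclideanCLM_diagonal_apply_sq (a : ι → ℂ) (η : EuclideanSpace ℂ ι) :
    ‖toEuclideanCLM (𝕜 := ℂ) (diagonal a) η‖ ^ 2 = ∑ i, ‖a i‖ ^ 2 * ‖η i‖ ^ 2 := by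
  simp [EuclideanSpace.norm_sq_eq, mulVec_diagonal, mul_pow]

theorem sqrt_sum_norm_toEuclideanCLM_diagonal_apply_sq_le {a : κ → ι → ℂ} {C : ℝ} (hC : 0 ≤ C)
    (ha : ∀ i, ∑ m, ‖a m i‖ ^ 2 ≤ C ^ 2) (η : EuclideanSpace ℂ ι) :
    √(∑ m, ‖toEuclideanCLM (𝕜 := ℂ) (diagonal (a m)) η‖ ^ 2) ≤ C * ‖η‖ := by
  refine Real.sqrt_le_iff.mpr ⟨by positivity, ?_⟩
  calc ∑ m, ‖toEuclideanCLM (𝕜 := ℂ) (diagonal (a m)) η‖ ^ 2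
      = ∑ i, (∑ m, ‖a m i‖ ^ 2) * ‖η i‖ ^ 2 := by
        simp only [norm_toEuclideanCLM_diagonal_apply_sq, Finset.sum_mul]
        exact Finset.sum_comm
    _ ≤ ∑ i, C ^ 2 * ‖η i‖ ^ 2 := by gcongr with i; exact ha i
    _ = (C * ‖η‖) ^ 2 := by rw [← Finset.mul_sum, ← EuclideanSpace.norm_sq_eq, mul_pow]

theorem inner_toEuclideanCLM_diagonal_mul_mul_diagonal (a c : ι → ℂ) (A : Matrix ι ι ℂ)
    (η ξ : EuclideanSpace ℂ ι) :
    ⟪η, toEuclideanCLM (𝕜 := ℂ) (diagonal a * A * diagonal c) ξ⟫_ℂ =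
      ⟪toEuclideanCLM (𝕜 := ℂ) (diagonal (star a)) η,
        toEuclideanCLM (𝕜 := ℂ) A (toEuclideanCLM (𝕜 := ℂ) (diagonal c) ξ)⟫_ℂ := by
  rw [← diagonal_conjTranspose, ← star_eq_conjTranspose, map_star,
    ContinuousLinearMap.star_eq_adjoint, ContinuousLinearMap.adjoint_inner_left, map_mul, map_mul]
  rfl

theorem norm_toEuclideanCLM_sum_diagonal_mul_mul_diagonal_le {a c : κ → ι → ℂ} {C₁ C₂ : ℝ}
    (hC₁ : 0 ≤ C₁) (hC₂ : 0 ≤ C₂) (ha : ∀ i, ∑ m, ‖a m i‖ ^ 2 ≤ C₁ ^ 2)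
    (hc : ∀ j, ∑ m, ‖c m j‖ ^ 2 ≤ C₂ ^ 2) (A : Matrix ι ι ℂ) :
    ‖toEuclideanCLM (𝕜 := ℂ) (∑ m, diagonal (a m) * A * diagonal (c m))‖ ≤
      C₁ * C₂ * ‖toEuclideanCLM (𝕜 := ℂ) A‖ := by
  set T := toEuclideanCLM (𝕜 := ℂ) A
  set U := fun m => toEuclideanCLM (𝕜 := ℂ) (diagonal (star (a m)))
  set W := fun m => toEuclideanCLM (𝕜 := ℂ) (diagonal (c m))
  have ha' : ∀ i, ∑ m, ‖star (a m) i‖ ^ 2 ≤ C₁ ^ 2 := by simpa using ha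
  refine ContinuousLinearMap.opNorm_le_of_norm_inner_le (by positivity) fun ξ η => ?_
  calc ‖⟪η, toEuclideanCLM (𝕜 := ℂ) (∑ m, diagonal (a m) * A * diagonal (c m)) ξ⟫_ℂ‖
      = ‖∑ m, ⟪U m η, T (W m ξ)⟫_ℂ‖ := by
        simp only [map_sum, _root_.sum_apply, inner_sum,
          inner_toEuclideanCLM_diagonal_mul_mul_diagonal, U, W, T]
    _ ≤ ∑ m, ‖U m η‖ * (‖T‖ * ‖W m ξ‖) := by
        refine (norm_sum_le _ _).trans (Finset.sum_le_sum fun m _ => ?_)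
        exact (norm_inner_le_norm _ _).trans (by gcongr; exact T.le_opNorm _)
    _ = ‖T‖ * ∑ m, ‖U m η‖ * ‖W m ξ‖ := by
        rw [Finset.mul_sum]; exact Finset.sum_congr rfl fun m _ => by ring
    _ ≤ ‖T‖ * (√(∑ m, ‖U m η‖ ^ 2) * √(∑ m, ‖W m ξ‖ ^ 2)) := by
        gcongr; exact Real.sum_mul_le_sqrt_mul_sqrt _ _ _
    _ ≤ ‖T‖ * ((C₁ * ‖η‖) * (C₂ * ‖ξ‖)) := by
        gcongr
        · exact sqrt_sum_norm_toEuclideanCLM_diagonal_apply_sq_le hC₁ ha' η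
        · exact sqrt_sum_norm_toEuclideanCLM_diagonal_apply_sq_le hC₂ hc ξ
    _ = C₁ * C₂ * ‖T‖ * ‖ξ‖ * ‖η‖ := by ring

variable {E : Type*} [NormedAddCommGroup E] [InnerProductSpace ℂ E]

theorem inner_hadamard_eq_sum_diagonal_mul_mul_diagonal (b : OrthonormalBasis κ ℂ E)
    (p q : ι → E) (A : Matrix ι ι ℂ) :
    of (fun i j => ⟪p i, q j⟫_ℂ) ⊙ A =
      ∑ m, diagonal (fun i => ⟪p i, b m⟫_ℂ) * A * diagonal (fun j => ⟪b m, q j⟫_ℂ) := by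
  ext i j
  simp only [hadamard_apply, of_apply, sum_apply, mul_diagonal, diagonal_mul,
    ← b.sum_inner_mul_inner (p i) (q j), Finset.sum_mul]
  exact Finset.sum_congr rfl fun m _ => by ring

theorem norm_toEuclideanCLM_inner_hadamard_le_of_finiteDimensional [FiniteDimensional ℂ E]
    {p q : ι → E} {C₁ C₂ : ℝ} (hC₁ : 0 ≤ C₁) (hC₂ : 0 ≤ C₂) (hp : ∀ i, ‖p i‖ ≤ C₁)
    (hq : ∀ j, ‖q j‖ ≤ C₂) (A : Matrix ι ι ℂ) :
    ‖toEuclideanCLM (𝕜 := ℂ) (of (fun i j => ⟪p i, q j⟫_ℂ) ⊙ A)‖ ≤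
      C₁ * C₂ * ‖toEuclideanCLM (𝕜 := ℂ) A‖ := by
  set b := stdOrthonormalBasis ℂ E
  rw [inner_hadamard_eq_sum_diagonal_mul_mul_diagonal b]
  refine norm_toEuclideanCLM_sum_diagonal_mul_mul_diagonal_le hC₁ hC₂ (fun i => ?_) (fun j => ?_) A
  · rw [b.sum_sq_norm_inner_left]; gcongr; exact hp i
  · rw [b.sum_sq_norm_inner_right]; gcongr; exact hq j

theorem norm_toEuclideanCLM_inner_hadamard_le {p q : ι → E} {C₁ C₂ : ℝ} (hp : ∀ i, ‖p i‖ ≤ C₁)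
    (hq : ∀ j, ‖q j‖ ≤ C₂) (A : Matrix ι ι ℂ) :
    ‖toEuclideanCLM (𝕜 := ℂ) (of (fun i j => ⟪p i, q j⟫_ℂ) ⊙ A)‖ ≤
      C₁ * C₂ * ‖toEuclideanCLM (𝕜 := ℂ) A‖ := by
  rcases isEmpty_or_nonempty ι with _ | ⟨⟨i₀⟩⟩
  · simp [Subsingleton.elim A 0]
  set K := Submodule.span ℂ (Set.range p ∪ Set.range q)
  have : FiniteDimensional ℂ K :=
    FiniteDimensional.span_of_finite ℂ ((Set.finite_range p).union (Set.finite_range q))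
  let p' : ι → K := fun i => ⟨p i, Submodule.subset_span (Or.inl ⟨i, rfl⟩)⟩
  let q' : ι → K := fun j => ⟨q j, Submodule.subset_span (Or.inr ⟨j, rfl⟩)⟩
  exact norm_toEuclideanCLM_inner_hadamard_le_of_finiteDimensional (p := p') (q := q')
    ((norm_nonneg _).trans (hp i₀)) ((norm_nonneg _).trans (hq i₀)) hp hq A

end Matrix

theorem schur_norm_le_of_hilbert_factorization_general
    {G : Type} [Group G] (u : G → ℂ) (C₁ C₂ : ℝ)
    (H : Type) [NormedAddCommGroup H] [InnerProductSpace ℂ H]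
    (P Q : G → H) (hP : ∀ x, ‖P x‖ ≤ C₁) (hQ : ∀ y, ‖Q y‖ ≤ C₂)
    (hu : ∀ x y : G, u (y⁻¹ * x) = (inner ℂ (P x) (Q y) : ℂ)) :
    ∀ (n : ℕ) (x : Fin n → G) (A : Matrix (Fin n) (Fin n) ℂ),
      ‖Matrix.toEuclideanCLM (𝕜 := ℂ)
          (Matrix.of fun i j => u ((x j)⁻¹ * x i) * A i j)‖
        ≤ C₁ * C₂ * ‖Matrix.toEuclideanCLM (𝕜 := ℂ) A‖ := by
  intro n x A
  have hM : (of fun i j => u ((x j)⁻¹ * x i) * A i j) =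
      of (fun i j => ⟪P (x i), Q (x j)⟫_ℂ) ⊙ A := by
    ext i j
    simp [hu, hadamard_apply]
  rw [hM]
  exact Matrix.norm_toEuclideanCLM_inner_hadamard_le (fun i => hP (x i)) (fun j => hQ (x j)) A

/-- If `u(y⁻¹x) = ⟨P x, Q y⟩` with `‖P‖ ≤ C₁`, `‖Q‖ ≤ C₂`, then every finite matrix
`[u(xⱼ⁻¹xᵢ)]` is a Schur multiplier of norm at most `C₁ * C₂`. -/
theorem schur_norm_le_of_hilbert_factorization
    {G : Type} [Group G] [Nonempty G] (u : G → ℂ) (C₁ C₂ : ℝ)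
    (H : Type) [NormedAddCommGroup H] [InnerProductSpace ℂ H]
    (P Q : G → H) (hP : ∀ x, ‖P x‖ ≤ C₁) (hQ : ∀ y, ‖Q y‖ ≤ C₂)
    (hu : ∀ x y : G, u (y⁻¹ * x) = (inner ℂ (P x) (Q y) : ℂ)) :
    ∀ (n : ℕ) (x : Fin n → G) (A : Matrix (Fin n) (Fin n) ℂ),
      ‖Matrix.toEuclideanCLM (𝕜 := ℂ)
          (Matrix.of fun i j => u ((x j)⁻¹ * x i) * A i j)‖
        ≤ C₁ * C₂ * ‖Matrix.toEuclideanCLM (𝕜 := ℂ) A‖ :=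
  schur_norm_le_of_hilbert_factorization_general u C₁ C₂ H P Q hP hQ hu
end

section
/- Let G be a group, H ≤ G a subgroup, and u : H → ℂ a function admitting a Hilbert-space factorization over H with bound C. Define ũ : G → ℂ by ũ(x) = u(x) for x ∈ H and ũ(x) = 0 otherwise. Then ũ admits a Hilbert-space factorization over G with the same bound C. -/
/-! Choose a representative `r(xH)` of every left coset and write `x = r(xH) · c(x)` with
`c(x) ∈ H`. Then `y⁻¹x ∈ H` exactly when `xH = yH`, and in that case `y⁻¹x = c(y)⁻¹ c(x)`.
So placing `P(c(x))` and `Q(c(y))` in the coordinates `xH` and `yH` of `ℓ²(G/H, 𝓗)` gives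
vectors of the same norms whose inner product is `u(c(y)⁻¹ c(x))` on a common coset and `0`
otherwise. -/

noncomputable section

def HasHSFactorization {G : Type} [Group G] (u : G → ℂ) (C : ℝ) : Prop :=
  ∃ (H : Type) (_ : NormedAddCommGroup H) (_ : InnerProductSpace ℂ H)
    (P Q : G → H) (a b : ℝ),
      (∀ x, ‖P x‖ ≤ a) ∧ (∀ y, ‖Q y‖ ≤ b) ∧ a * b ≤ C ∧
      ∀ x y, u (y⁻¹ * x) = (inner ℂ (P x) (Q y) : ℂ)

open QuotientGroup

namespace lp

variable {𝕜 ι : Type*} [RCLike 𝕜] [DecidableEq ι] {E : ι → Type*}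
  [∀ i, NormedAddCommGroup (E i)] [∀ i, InnerProductSpace 𝕜 (E i)]

theorem inner_single_single_self (i : ι) (a b : E i) :
    inner 𝕜 (lp.single 2 i a) (lp.single 2 i b) = inner 𝕜 a b := by
  rw [inner_single_left, lp.single_apply_self]

theorem inner_single_single_of_ne {i j : ι} (hij : i ≠ j) (a : E i) (b : E j) :
    inner 𝕜 (lp.single 2 i a) (lp.single 2 j b) = 0 := by
  rw [inner_single_left, lp.single_apply_ne 2 j b hij, inner_zero_right]

end lp

namespace Subgroup

variable {G : Type*} [Group G] (H : Subgroup G)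

def cosetCoord (x : G) : H :=
  ⟨(x : G ⧸ H).out⁻¹ * x, by rw [← QuotientGroup.eq, out_eq']⟩

theorem cosetCoord_inv_mul_cosetCoord {x y : G} (hxy : y⁻¹ * x ∈ H) :
    (H.cosetCoord y)⁻¹ * H.cosetCoord x = ⟨y⁻¹ * x, hxy⟩ := by
  have hcoset : (x : G ⧸ H) = y := (QuotientGroup.eq.2 hxy).symm
  ext
  simp only [cosetCoord, coe_mul, coe_inv, hcoset]
  group

end Subgroup

/-- Extending a function on a subgroup by zero preserves Hilbert-space factorization bounds. -/
theorem subgroup_extension_factorization {G : Type} [Group G] (H : Subgroup G)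
    [DecidablePred (· ∈ H)] (u : H → ℂ) (C : ℝ)
    (hu : HasHSFactorization u C) :
    HasHSFactorization (fun x : G => if hx : x ∈ H then u ⟨x, hx⟩ else 0) C := by
  classical
  obtain ⟨𝓗, _, _, P, Q, a, b, hP, hQ, hab, hfac⟩ := hu
  refine ⟨lp (fun _ : G ⧸ H => 𝓗) 2, inferInstance, inferInstance,
    fun x => lp.single 2 (x : G ⧸ H) (P (H.cosetCoord x)),
    fun y => lp.single 2 (y : G ⧸ H) (Q (H.cosetCoord y)), a, b,
    fun x => (lp.norm_single two_pos _ _).trans_le (hP _),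
    fun y => (lp.norm_single two_pos _ _).trans_le (hQ _), hab, fun x y => ?_⟩
  dsimp only
  by_cases hxy : y⁻¹ * x ∈ H
  · have hcoset : (x : G ⧸ H) = y := (QuotientGroup.eq.2 hxy).symm
    rw [dif_pos hxy, ← H.cosetCoord_inv_mul_cosetCoord hxy, hfac, hcoset,
      lp.inner_single_single_self]
  · have hcoset : (x : G ⧸ H) ≠ y := fun h => hxy (QuotientGroup.eq.1 h.symm)
    rw [dif_neg hxy, lp.inner_single_single_of_ne hcoset]
end
end

section
/- Let G be a discrete group with the weak Haagerup property witnessed by functions in B₂(G) ∩ c₀(G) of norm at most C. Formally: suppose for every finite set F ⊆ G and ε > 0 there is u : G → ℂ vanishing at infinity, admitting a Hilbert-space factorization with bound ≤ C, and with |u(g) − 1| ≤ ε for g ∈ F. Then for every finite F ⊆ G and ε > 0 there exists w : G → ℂ vanishing at infinity, with Hilbert-space factorization bound ≤ C + ε, such that w(x) = 1 for all x ∈ F. -/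
/-!
Take `u` with `|u - 1| ≤ ε / (|F| + 1)` on `F` and correct it to
`w = u + ∑_{s ∈ F} (1 - u s) δ_s`. The best factorization bound is subadditive (balance the two
factorizations, then take the orthogonal direct sum), and `δ_s` has bound `1` through `ℓ²(G)`,
so the correction costs at most `∑_{s ∈ F} |1 - u s| ≤ ε`. It changes `u` only on a finite set,
so `w` still vanishes at infinity.
-/

noncomputable section

def VanishesAtInfinity {G : Type} (u : G → ℂ) : Prop :=
  ∀ δ : ℝ, 0 < δ → {g : G | δ ≤ ‖u g‖}.Finite

open Filter Topology

section Factorization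

variable {G : Type} [Group G]

lemma HasHSFactorization.nonneg {u : G → ℂ} {C : ℝ} (h : HasHSFactorization u C) : 0 ≤ C := by
  obtain ⟨H, _, _, P, Q, a, b, hP, hQ, hab, -⟩ := h
  exact (mul_nonneg ((norm_nonneg _).trans (hP 1)) ((norm_nonneg _).trans (hQ 1))).trans hab

lemma HasHSFactorization.mono {u : G → ℂ} {C D : ℝ} (h : HasHSFactorization u C) (hCD : C ≤ D) :
    HasHSFactorization u D := by
  obtain ⟨H, _, _, P, Q, a, b, hP, hQ, hab, hu⟩ := h
  exact ⟨H, inferInstance, inferInstance, P, Q, a, b, hP, hQ, hab.trans hCD, hu⟩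

/-- Rescaling `P ↦ λ P`, `Q ↦ λ⁻¹ Q` with `λ = √(b / a)` gives both sides the bound `√(a b)`. -/
lemma HasHSFactorization.exists_balanced {u : G → ℂ} {C : ℝ} (h : HasHSFactorization u C) :
    ∃ (H : Type) (_ : NormedAddCommGroup H) (_ : InnerProductSpace ℂ H) (P Q : G → H),
      (∀ x, ‖P x‖ ^ 2 ≤ C) ∧ (∀ y, ‖Q y‖ ^ 2 ≤ C) ∧
      ∀ x y, u (y⁻¹ * x) = (inner ℂ (P x) (Q y) : ℂ) := by
  have hC := h.nonneg
  obtain ⟨H, _, _, P, Q, a, b, hP, hQ, hab, hu⟩ := h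
  have ha : 0 ≤ a := (norm_nonneg _).trans (hP 1)
  have hb : 0 ≤ b := (norm_nonneg _).trans (hQ 1)
  rcases ha.eq_or_lt with rfl | ha
  · refine ⟨H, inferInstance, inferInstance, 0, 0, by simpa using hC, by simpa using hC,
      fun x y => ?_⟩
    simp [hu, norm_le_zero_iff.1 (hP x)]
  rcases hb.eq_or_lt with rfl | hb
  · refine ⟨H, inferInstance, inferInstance, 0, 0, by simpa using hC, by simpa using hC,
      fun x y => ?_⟩
    simp [hu, norm_le_zero_iff.1 (hQ y)]
  set l := √(b / a)
  have hl0 : 0 < l := Real.sqrt_pos.2 (div_pos hb ha)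
  have hlsq : l ^ 2 = b / a := Real.sq_sqrt (div_pos hb ha).le
  refine ⟨H, inferInstance, inferInstance, fun x => (l : ℂ) • P x, fun y => (l⁻¹ : ℂ) • Q y,
    fun x => ?_, fun y => ?_, fun x y => ?_⟩
  · calc ‖(l : ℂ) • P x‖ ^ 2 = l ^ 2 * ‖P x‖ ^ 2 := by
          rw [norm_smul, Complex.norm_real, Real.norm_of_nonneg hl0.le, mul_pow]
      _ ≤ l ^ 2 * a ^ 2 := by gcongr; exact hP x
      _ = a * b := by rw [hlsq]; field_simp
      _ ≤ C := hab
  · calc ‖(l⁻¹ : ℂ) • Q y‖ ^ 2 = ‖Q y‖ ^ 2 / l ^ 2 := by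
          rw [norm_smul, norm_inv, Complex.norm_real, Real.norm_of_nonneg hl0.le, mul_pow,
            inv_pow, inv_mul_eq_div]
      _ ≤ b ^ 2 / l ^ 2 := by gcongr; exact hQ y
      _ = a * b := by rw [hlsq]; field_simp
      _ ≤ C := hab
  · rw [hu, inner_smul_left, inner_smul_right, Complex.conj_ofReal, ← mul_assoc,
      mul_inv_cancel₀ (by exact_mod_cast hl0.ne'), one_mul]

lemma HasHSFactorization.add {u v : G → ℂ} {C D : ℝ} (hu : HasHSFactorization u C)
    (hv : HasHSFactorization v D) : HasHSFactorization (u + v) (C + D) := by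
  obtain ⟨H, _, _, P, Q, hP, hQ, hPQ⟩ := hu.exists_balanced
  obtain ⟨K, _, _, P', Q', hP', hQ', hPQ'⟩ := hv.exists_balanced
  have hCD : 0 ≤ C + D := add_nonneg hu.nonneg hv.nonneg
  have norm_le {p : H} {q : K} (hp : ‖p‖ ^ 2 ≤ C) (hq : ‖q‖ ^ 2 ≤ D) :
      ‖WithLp.toLp 2 (p, q)‖ ≤ √(C + D) := by
    rw [Real.le_sqrt (norm_nonneg _) hCD, WithLp.prod_norm_sq_eq_of_L2]
    exact add_le_add hp hq
  refine ⟨WithLp 2 (H × K), inferInstance, inferInstance, fun x => WithLp.toLp 2 (P x, P' x),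
    fun y => WithLp.toLp 2 (Q y, Q' y), √(C + D), √(C + D), fun x => norm_le (hP x) (hP' x),
    fun y => norm_le (hQ y) (hQ' y), (Real.mul_self_sqrt hCD).le, fun x y => ?_⟩
  rw [WithLp.prod_inner_apply, Pi.add_apply, hPQ, hPQ']

lemma hasHSFactorization_zero : HasHSFactorization (0 : G → ℂ) 0 :=
  ⟨ℂ, inferInstance, inferInstance, 0, 0, 0, 0, by simp, by simp, by simp, by simp⟩

lemma hasHSFactorization_sum {ι : Type*} (s : Finset ι) {u : ι → G → ℂ} {C : ι → ℝ}
    (h : ∀ i ∈ s, HasHSFactorization (u i) (C i)) :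
    HasHSFactorization (∑ i ∈ s, u i) (∑ i ∈ s, C i) := by
  classical
  induction s using Finset.induction_on with
  | empty => simpa using hasHSFactorization_zero
  | insert i s hi ih =>
    rw [Finset.sum_insert hi, Finset.sum_insert hi]
    exact (h i (Finset.mem_insert_self i s)).add
      (ih fun j hj => h j (Finset.mem_insert_of_mem hj))

/-- `δ_s (y⁻¹ x) = ⟪e_x, e_{y s}⟫` in `ℓ²(G)`. -/
lemma hasHSFactorization_single [DecidableEq G] (s : G) (c : ℂ) :
    HasHSFactorization (Pi.single s c) ‖c‖ := by
  refine ⟨lp (fun _ : G => ℂ) 2, inferInstance, inferInstance, fun x => lp.single 2 x 1,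
    fun y => lp.single 2 (y * s) c, 1, ‖c‖, by simp, by simp, by simp, fun x y => ?_⟩
  simp [lp.inner_single_left, lp.single_apply, Pi.single_apply, inv_mul_eq_iff_eq_mul]

end Factorization

section Vanishing

variable {G : Type}

lemma vanishesAtInfinity_iff_tendsto {u : G → ℂ} :
    VanishesAtInfinity u ↔ Tendsto u cofinite (𝓝 0) := by
  simp [VanishesAtInfinity, Metric.tendsto_nhds, eventually_cofinite]

lemma tendsto_pi_single_cofinite [DecidableEq G] (s : G) (c : ℂ) :
    Tendsto (Pi.single s c) cofinite (𝓝 0) :=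
  tendsto_nhds_of_eventually_eq <|
    (eventually_cofinite_ne s).mono fun _ hg => by simp [hg]

end Vanishing

/-- From weak Haagerup witnesses with bound `C` approximating 1 on finite sets one gets,
for every finite set `F` and `ε > 0`, a witness with bound `C + ε` which is exactly 1 on `F`. -/
theorem exact_one_on_finite_sets {G : Type} [Group G] (C : ℝ)
    (h : ∀ (F : Finset G) (ε : ℝ), 0 < ε → ∃ u : G → ℂ,
      VanishesAtInfinity u ∧ HasHSFactorization u C ∧ ∀ g ∈ F, ‖u g - 1‖ ≤ ε) :
    ∀ (F : Finset G) (ε : ℝ), 0 < ε → ∃ w : G → ℂ,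
      VanishesAtInfinity w ∧ HasHSFactorization w (C + ε) ∧ ∀ x ∈ F, w x = 1 := by
  classical
  intro F ε hε
  obtain ⟨u, hu_van, hu_fac, hu_near⟩ := h F (ε / (F.card + 1)) (by positivity)
  refine ⟨u + ∑ s ∈ F, Pi.single s (1 - u s), ?_, ?_, fun x hx => ?_⟩
  · rw [vanishesAtInfinity_iff_tendsto] at hu_van ⊢
    have hw := hu_van.add (tendsto_finsetSum F fun s _ => tendsto_pi_single_cofinite s (1 - u s))
    rw [Finset.sum_const_zero, add_zero] at hw
    convert hw using 2 with g
    simp only [Pi.add_apply, Finset.sum_apply]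
  · have hcorr : ∑ s ∈ F, ‖1 - u s‖ ≤ ε := calc
      ∑ s ∈ F, ‖1 - u s‖ ≤ ∑ _s ∈ F, ε / (F.card + 1) :=
        Finset.sum_le_sum fun s hs => norm_sub_rev (1 : ℂ) (u s) ▸ hu_near s hs
      _ ≤ ε := by
        rw [Finset.sum_const, nsmul_eq_mul, mul_div_assoc', div_le_iff₀ (by positivity)]
        nlinarith
    exact (hu_fac.add (hasHSFactorization_sum F fun s _ => hasHSFactorization_single s _)).mono
      (by linarith)
  · simp [Finset.sum_apply, Finset.sum_pi_single, hx]
end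
end

section
/- Let G be a countable discrete group. Then G has the weak Haagerup property with constant 1 if and only if there exists a proper function ψ : G → [0,∞) such that for every t > 0 the function e^{−tψ} admits a Hilbert-space factorization with bound ≤ 1. (Properness means {g : ψ(g) ≤ R} is finite for every R.) -/
noncomputable section

/-- `G` has the weak Haagerup property with constant 1. -/
def WeakHaagerupPropertyOne (G : Type) [Group G] : Prop :=
  ∀ (F : Finset G) (ε : ℝ), 0 < ε → ∃ u : G → ℂ,
    VanishesAtInfinity u ∧ HasHSFactorization u 1 ∧ ∀ g ∈ F, ‖u g - 1‖ ≤ ε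

/-!
Encode `‖u‖_{B₂} ≤ 1` by asking that `(x, y) ↦ u (y⁻¹ * x)` be the off-diagonal block of a
positive semidefinite kernel on `G ⊕ G` with diagonal at most one: the Gram matrix of a
factorization is such a kernel, and conversely Moore's theorem realizes every such kernel as a
Gram matrix. In this form the Schur product theorem makes these functions a monoid, they are
stable under subconvex combinations, and, the kernels forming a compact set by Tychonoff, they
are closed under pointwise limits. Hence `e^{-s(1-u)} = Σ e^{-s} sᵏ/k! • uᵏ` and infinite
products of such functions stay in the unit ball.

Given the weak Haagerup property, choose `uₙ` in the unit ball, vanishing at infinity, with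
`‖uₙ - 1‖ ≤ 2⁻ⁿ / (2(n + 1))` on an exhausting sequence of finite sets, and put
`ψ = Σ (n + 1)(1 - |uₙ|²)`. Then `e^{-tψ} = Π e^{-t(n+1)(1 - |uₙ|²)}`, and `ψ g ≤ R` forces
`|u_N g| ≥ 1/2` for `N ≥ 2R`, so `ψ` is proper. Conversely `e^{-tψ}` vanishes at infinity since
`ψ` is proper, and tends to `1` pointwise as `t → 0⁺`.
-/

open scoped ComplexOrder InnerProductSpace ComplexConjugate Complex
open Matrix Filter Topology

namespace Matrix

theorem PosSemidef.exists_gram {𝕜 X : Type} [RCLike 𝕜] {K : Matrix X X 𝕜} (hK : K.PosSemidef) :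
    ∃ (H : Type) (_ : NormedAddCommGroup H) (_ : InnerProductSpace 𝕜 H) (v : X → H),
      gram 𝕜 v = K := by
  let K' : Matrix X X (𝕜 →L[𝕜] 𝕜) := K.map (· • 1)
  have hK' : K'.PosSemidef := by
    have tfae := (RKHS.posSemidef_tfae (𝕜 := 𝕜) (K := K')).out 2 0
    refine tfae.mp ⟨?_, fun c => ?_⟩
    · ext i j
      simp [K', Matrix.conjTranspose_apply, star_smul, hK.isHermitian.apply]
    · convert (RCLike.nonneg_iff.mp (hK.2 c)).1 using 2
      simp only [K', map_apply, _root_.smul_apply, one_apply_eq_self, smul_eq_mul,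
        RCLike.inner_apply, map_mul, RCLike.star_def]
      refine Finsupp.sum_congr fun x _ => Finsupp.sum_congr fun y _ => ?_
      rw [← hK.isHermitian.apply x y, RCLike.star_def]
      ring
  have : Fact K'.PosSemidef := ⟨hK'⟩
  refine ⟨RKHS.OfKernel K', inferInstance, inferInstance, fun x => RKHS.kerFun _ x 1, ?_⟩
  ext x y
  rw [gram_apply, ← RKHS.kernel_inner, RKHS.OfKernel.kernel_ofKernel]
  simpa [K'] using hK.isHermitian.apply x y

theorem posSemidef_gram' {𝕜 X E : Type*} [RCLike 𝕜] [NormedAddCommGroup E]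
    [InnerProductSpace 𝕜 E] (v : X → E) : (gram 𝕜 v).PosSemidef := by
  refine ⟨isHermitian_gram 𝕜 v, fun c => ?_⟩
  have h : (c.sum fun i a => c.sum fun j b => star a * gram 𝕜 v i j * b) =
      ⟪c.sum fun i a => a • v i, c.sum fun j b => b • v j⟫_𝕜 := by
    simp_rw [Finsupp.sum, sum_inner, inner_sum, inner_smul_left, inner_smul_right, gram_apply,
      RCLike.star_def, mul_right_comm _ _ (c _), mul_assoc]
  rw [h, inner_self_eq_norm_sq_to_K]
  exact pow_nonneg (RCLike.ofReal_nonneg.mpr (norm_nonneg _)) 2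

theorem isClosed_setOf_posSemidef (𝕜 X : Type*) [RCLike 𝕜] :
    IsClosed {K : Matrix X X 𝕜 | K.PosSemidef} := by
  have hHerm : IsClosed {K : Matrix X X 𝕜 | K.IsHermitian} :=
    isClosed_eq continuous_id.matrix_conjTranspose continuous_id
  have hForm : ∀ c : X →₀ 𝕜, IsClosed
      {K : Matrix X X 𝕜 | 0 ≤ c.sum fun i a => c.sum fun j b => star a * K i j * b} := by
    intro c
    refine isClosed_le continuous_const ?_
    simp only [Finsupp.sum]
    fun_prop
  simpa only [PosSemidef, Set.ofPred_and, Set.ofPred_forall] using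
    hHerm.inter (isClosed_iInter hForm)

end Matrix

def contractiveKernels (X : Type) : Set (Matrix X X ℂ) := {K | K.PosSemidef ∧ ∀ i, K i i ≤ 1}

theorem mem_contractiveKernels_iff {X : Type} {K : Matrix X X ℂ} :
    K ∈ contractiveKernels X ↔ ∃ (H : Type) (_ : NormedAddCommGroup H)
      (_ : InnerProductSpace ℂ H) (v : X → H), (∀ i, ‖v i‖ ≤ 1) ∧ gram ℂ v = K := by
  have diag_le_one : ∀ {H : Type} [NormedAddCommGroup H] [InnerProductSpace ℂ H] (v : X → H)
      (i : X), gram ℂ v i i ≤ 1 ↔ ‖v i‖ ≤ 1 := by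
    intro H _ _ v i
    rw [gram_apply, inner_self_eq_norm_sq_to_K, ← RCLike.ofReal_pow, ← RCLike.ofReal_one,
      RCLike.ofReal_le_ofReal, sq_le_one_iff₀ (norm_nonneg _)]
  constructor
  · rintro ⟨hK, hdiag⟩
    obtain ⟨H, _, _, v, rfl⟩ := hK.exists_gram
    exact ⟨H, _, _, v, fun i => (diag_le_one v i).mp (hdiag i), rfl⟩
  · rintro ⟨H, _, _, v, hv, rfl⟩
    exact ⟨posSemidef_gram' v, fun i => (diag_le_one v i).mpr (hv i)⟩

theorem norm_apply_le_one_of_mem_contractiveKernels {X : Type} {K : Matrix X X ℂ}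
    (hK : K ∈ contractiveKernels X) (i j : X) : ‖K i j‖ ≤ 1 := by
  obtain ⟨H, _, _, v, hv, rfl⟩ := mem_contractiveKernels_iff.mp hK
  calc ‖⟪v i, v j⟫_ℂ‖ ≤ ‖v i‖ * ‖v j‖ := norm_inner_le_norm _ _
    _ ≤ 1 := mul_le_one₀ (hv i) (norm_nonneg _) (hv j)

theorem isCompact_contractiveKernels (X : Type) : IsCompact (contractiveKernels X) := by
  have hClosed : IsClosed (contractiveKernels X) := by
    have h : contractiveKernels X = {K | K.PosSemidef} ∩ ⋂ i, {K | K i i ≤ 1} := by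
      ext; simp [contractiveKernels]
    rw [h]
    exact (isClosed_setOf_posSemidef ℂ X).inter (isClosed_iInter fun i =>
      isClosed_le (continuous_id.matrix_elem i i) continuous_const)
  refine (isCompact_univ_pi fun _ => isCompact_univ_pi fun _ =>
    isCompact_closedBall (0 : ℂ) 1).of_isClosed_subset hClosed fun K hK => ?_
  simpa using norm_apply_le_one_of_mem_contractiveKernels hK

section HerzSchur

variable {G : Type} [Group G]

theorem hasHSFactorization_one_iff {u : G → ℂ} :
    HasHSFactorization u 1 ↔ ∃ (H : Type) (_ : NormedAddCommGroup H)
      (_ : InnerProductSpace ℂ H) (P Q : G → H),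
        (∀ x, ‖P x‖ ≤ 1) ∧ (∀ y, ‖Q y‖ ≤ 1) ∧ ∀ x y, u (y⁻¹ * x) = ⟪P x, Q y⟫_ℂ := by
  constructor
  · rintro ⟨H, _, _, P, Q, a, b, hP, hQ, hab, hu⟩
    have hb : 0 ≤ b := (norm_nonneg _).trans (hQ 1)
    refine ⟨H, ‹_›, ‹_›, fun x => (b : ℂ) • P x, fun y => (b⁻¹ : ℂ) • Q y, fun x => ?_, fun y => ?_,
      fun x y => ?_⟩
    · rw [norm_smul, Complex.norm_real, Real.norm_of_nonneg hb]
      calc b * ‖P x‖ ≤ b * a := mul_le_mul_of_nonneg_left (hP x) hb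
        _ ≤ 1 := by linarith
    · rw [norm_smul, norm_inv, Complex.norm_real, Real.norm_of_nonneg hb]
      exact inv_mul_le_one_of_le₀ (hQ y) hb
    · rcases hb.eq_or_lt with rfl | hb
      · have hQ0 : Q y = 0 := norm_le_zero_iff.mp (hQ y)
        simp [hu, hQ0]
      · rw [inner_smul_left, inner_smul_right, Complex.conj_ofReal, ← mul_assoc,
          mul_inv_cancel₀ (by exact_mod_cast hb.ne'), one_mul, hu]
  · rintro ⟨H, _, _, P, Q, hP, hQ, hu⟩
    exact ⟨H, _, _, P, Q, 1, 1, hP, hQ, by norm_num, hu⟩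

def herzSchurUnitBall (G : Type) [Group G] : Submonoid (G → ℂ) where
  carrier := {u | ∃ K ∈ contractiveKernels (G ⊕ G), ∀ x y, K (.inl x) (.inr y) = u (y⁻¹ * x)}
  one_mem' := ⟨gram ℂ fun _ => (1 : ℂ),
    mem_contractiveKernels_iff.mpr ⟨ℂ, _, _, _, fun _ => by simp, rfl⟩, fun x y => by simp⟩
  mul_mem' := by
    rintro u v ⟨K, ⟨hK, hKd⟩, hKu⟩ ⟨L, ⟨hL, hLd⟩, hLv⟩
    exact ⟨K ⊙ L, ⟨hK.hadamard hL, fun i => mul_le_one₀ (hKd i) hL.diag_nonneg (hLd i)⟩,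
      fun x y => by simp [hKu, hLv]⟩

theorem mem_herzSchurUnitBall_iff {u : G → ℂ} :
    u ∈ herzSchurUnitBall G ↔ HasHSFactorization u 1 := by
  rw [hasHSFactorization_one_iff]
  constructor
  · rintro ⟨K, hK, hKu⟩
    obtain ⟨H, _, _, v, hv, rfl⟩ := mem_contractiveKernels_iff.mp hK
    exact ⟨H, _, _, v ∘ .inl, v ∘ .inr, fun x => hv _, fun y => hv _, fun x y => (hKu x y).symm⟩
  · rintro ⟨H, _, _, P, Q, hP, hQ, hu⟩
    refine ⟨gram ℂ (Sum.elim P Q), mem_contractiveKernels_iff.mpr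
      ⟨H, _, _, _, Sum.forall.mpr ⟨hP, hQ⟩, rfl⟩, fun x y => (hu x y).symm⟩

namespace herzSchurUnitBall

theorem norm_le_one {u : G → ℂ} (hu : u ∈ herzSchurUnitBall G) (g : G) : ‖u g‖ ≤ 1 := by
  obtain ⟨K, hK, hKu⟩ := hu
  simpa [hKu] using norm_apply_le_one_of_mem_contractiveKernels hK (.inl g) (.inr 1)

theorem conj_mem {u : G → ℂ} (hu : u ∈ herzSchurUnitBall G) :
    (fun g => conj (u g)) ∈ herzSchurUnitBall G := by
  obtain ⟨K, ⟨hK, hKd⟩, hKu⟩ := hu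
  refine ⟨Kᵀ, ⟨hK.transpose, hKd⟩, fun x y => ?_⟩
  rw [transpose_apply, ← hK.isHermitian.apply, hKu]
  rfl

theorem norm_sq_mem {u : G → ℂ} (hu : u ∈ herzSchurUnitBall G) :
    (fun g => ((‖u g‖ ^ 2 : ℝ) : ℂ)) ∈ herzSchurUnitBall G := by
  convert mul_mem hu (conj_mem hu) using 1
  ext g
  simp [Complex.mul_conj']

theorem isClosed : IsClosed (herzSchurUnitBall G : Set (G → ℂ)) := by
  let T : Set (Matrix (G ⊕ G) (G ⊕ G) ℂ) :=
    {K | ∀ x y, K (.inl x) (.inr y) = K (.inl (y⁻¹ * x)) (.inr 1)}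
  have hT : IsClosed T := by
    simp only [T, Set.ofPred_forall]
    exact isClosed_iInter fun x => isClosed_iInter fun y =>
      isClosed_eq (continuous_id.matrix_elem _ _) (continuous_id.matrix_elem _ _)
  have hball : (herzSchurUnitBall G : Set (G → ℂ)) =
      (fun K g => K (.inl g) (.inr 1)) '' (contractiveKernels (G ⊕ G) ∩ T) := by
    ext u
    constructor
    · rintro ⟨K, hK, hKu⟩
      exact ⟨K, ⟨hK, fun x y => by simp [hKu]⟩, funext fun g => by simpa using hKu g 1⟩
    · rintro ⟨K, ⟨hK, hKT⟩, rfl⟩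
      exact ⟨K, hK, hKT⟩
  rw [hball]
  exact ((isCompact_contractiveKernels _).inter_right hT).image
    (continuous_pi fun g => continuous_id.matrix_elem _ _) |>.isClosed

theorem sum_smul_mem {ι : Type*} (s : Finset ι) {r : ι → ℝ} {u : ι → G → ℂ}
    (hr : ∀ i ∈ s, 0 ≤ r i) (hr1 : ∑ i ∈ s, r i ≤ 1)
    (hu : ∀ i ∈ s, u i ∈ herzSchurUnitBall G) :
    ∑ i ∈ s, r i • u i ∈ herzSchurUnitBall G := by
  choose! K hK hKu using hu
  refine ⟨∑ i ∈ s, r i • K i, ⟨posSemidef_sum s fun i hi => (hK i hi).1.smul (hr i hi),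
    fun j => ?_⟩, fun x y => ?_⟩
  · calc (∑ i ∈ s, r i • K i) j j = ∑ i ∈ s, r i • K i j j := by simp [Matrix.sum_apply]
      _ ≤ ∑ i ∈ s, r i • (1 : ℂ) :=
        Finset.sum_le_sum fun i hi => smul_le_smul_of_nonneg_left ((hK i hi).2 j) (hr i hi)
      _ = ((∑ i ∈ s, r i : ℝ) : ℂ) := by simp [Complex.real_smul]
      _ ≤ 1 := by exact_mod_cast hr1
  · simp only [Matrix.sum_apply, Finset.sum_apply, Matrix.smul_apply, Pi.smul_apply]
    exact Finset.sum_congr rfl fun i hi => by rw [hKu i hi]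

theorem exp_mem {u : G → ℂ} (hu : u ∈ herzSchurUnitBall G) {s : ℝ} (hs : 0 ≤ s) :
    (fun g => cexp (-(s * (1 - u g)))) ∈ herzSchurUnitBall G := by
  set r : ℕ → ℝ := fun k => Real.exp (-s) * (s ^ k / k.factorial)
  have hr1 : ∀ N, ∑ k ∈ Finset.range N, r k ≤ 1 := fun N => by
    calc ∑ k ∈ Finset.range N, r k
        = Real.exp (-s) * ∑ k ∈ Finset.range N, s ^ k / k.factorial := by rw [Finset.mul_sum]
      _ ≤ Real.exp (-s) * Real.exp s := by gcongr; exact Real.sum_le_exp_of_nonneg hs N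
      _ = 1 := by rw [← Real.exp_add, neg_add_cancel, Real.exp_zero]
  have hpartial : ∀ N, ∑ k ∈ Finset.range N, r k • u ^ k ∈ herzSchurUnitBall G := fun N =>
    sum_smul_mem _ (fun k _ => by positivity) (hr1 N) fun k _ => pow_mem hu k
  refine isClosed.mem_of_tendsto (b := atTop) (tendsto_pi_nhds.mpr fun g => ?_)
    (Eventually.of_forall hpartial)
  have hsum := (NormedSpace.expSeries_div_hasSum_exp ((s : ℂ) * u g)).mul_left
    (Real.exp (-s) : ℂ)
  rw [← Complex.exp_eq_exp_ℂ] at hsum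
  convert hsum.tendsto_sum_nat using 1
  · ext N
    simp only [r, Finset.sum_apply, Pi.smul_apply, Pi.pow_apply, Complex.real_smul]
    push_cast
    exact Finset.sum_congr rfl fun k _ => by ring
  · rw [Complex.ofReal_exp, ← Complex.exp_add]
    push_cast
    ring_nf

theorem exp_neg_tsum_mem {w : ℕ → G → ℂ} (hw : ∀ n, w n ∈ herzSchurUnitBall G) {c : ℕ → ℝ}
    (hc : ∀ n, 0 ≤ c n) (hs : ∀ g, Summable fun n => c n * (1 - w n g)) :
    (fun g => cexp (-∑' n, c n * (1 - w n g))) ∈ herzSchurUnitBall G := by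
  refine isClosed.mem_of_tendsto (b := atTop)
    (f := fun N => ∏ n ∈ Finset.range N, fun g => cexp (-(c n * (1 - w n g))))
    (tendsto_pi_nhds.mpr fun g => ?_)
    (Eventually.of_forall fun N => Submonoid.prod_mem _ fun n _ => exp_mem (hw n) (hc n))
  simp only [Finset.prod_apply, ← Complex.exp_sum, Finset.sum_neg_distrib]
  exact ((Complex.continuous_exp.comp continuous_neg).tendsto _).comp
    (hs g).hasSum.tendsto_sum_nat

end herzSchurUnitBall

end HerzSchur

theorem one_sub_norm_sq_le {E : Type*} [SeminormedRing E] [NormOneClass E] {z : E}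
    (hz : ‖z‖ ≤ 1) : 1 - ‖z‖ ^ 2 ≤ 2 * ‖z - 1‖ := by
  have h : 1 - ‖z‖ ≤ ‖z - 1‖ := by
    simpa [norm_sub_rev] using norm_sub_norm_le (1 : E) z
  nlinarith [norm_nonneg z]

theorem vanishesAtInfinity_exp_neg_mul {X : Type} {ψ : X → ℝ}
    (hψ : ∀ R : ℝ, {x | ψ x ≤ R}.Finite) {t : ℝ} (ht : 0 < t) :
    VanishesAtInfinity fun x => ((Real.exp (-(t * ψ x)) : ℝ) : ℂ) := by
  intro δ hδ
  refine (hψ (-Real.log δ / t)).subset fun x hx => ?_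
  simp only [Set.mem_ofPred_eq, Complex.norm_real, Real.norm_of_nonneg (Real.exp_pos _).le] at hx
  have h := Real.log_le_log hδ hx
  rw [Real.log_exp] at h
  rw [Set.mem_ofPred_eq, le_div_iff₀ ht]
  linarith

theorem mul_one_sub_norm_sq_nonneg {z : ℂ} (n : ℕ) (hz : ‖z‖ ≤ 1) :
    0 ≤ ((n : ℝ) + 1) * (1 - ‖z‖ ^ 2) :=
  mul_nonneg (by positivity) (sub_nonneg.mpr (pow_le_one₀ (norm_nonneg _) hz))

theorem summable_mul_one_sub_norm_sq {z : ℕ → ℂ} (hz : ∀ n, ‖z n‖ ≤ 1)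
    (hz1 : ∀ᶠ n in atTop, ‖z n - 1‖ ≤ (1 / 2) ^ n / (2 * (n + 1))) :
    Summable fun n : ℕ => ((n : ℝ) + 1) * (1 - ‖z n‖ ^ 2) :=
  summable_geometric_two.of_norm_bounded_eventually_nat <| hz1.mono fun n hn => by
    rw [Real.norm_of_nonneg (mul_one_sub_norm_sq_nonneg n (hz n))]
    calc ((n : ℝ) + 1) * (1 - ‖z n‖ ^ 2) ≤ (n + 1) * (2 * ‖z n - 1‖) := by
          gcongr; exact one_sub_norm_sq_le (hz n)
      _ ≤ (n + 1) * (2 * ((1 / 2) ^ n / (2 * (n + 1)))) := by gcongr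
      _ = (1 / 2) ^ n := by field_simp

theorem finite_setOf_tsum_mul_one_sub_norm_sq_le {X : Type} {u : ℕ → X → ℂ}
    (hu0 : ∀ n, VanishesAtInfinity (u n)) (hu1 : ∀ n x, ‖u n x‖ ≤ 1)
    (hs : ∀ x, Summable fun n : ℕ => ((n : ℝ) + 1) * (1 - ‖u n x‖ ^ 2)) (R : ℝ) :
    {x | ∑' n : ℕ, ((n : ℝ) + 1) * (1 - ‖u n x‖ ^ 2) ≤ R}.Finite := by
  set N := ⌈2 * R⌉₊
  refine (hu0 N (1 / 2) (by norm_num)).subset fun x hx => ?_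
  have hN : 2 * R ≤ N := Nat.le_ceil _
  have hNx : ((N : ℝ) + 1) * (1 - ‖u N x‖ ^ 2) ≤ R :=
    ((hs x).le_tsum N fun n _ => mul_one_sub_norm_sq_nonneg n (hu1 n x)).trans hx
  have hle := hu1 N x
  rw [Set.mem_ofPred_eq]
  by_contra! hsmall
  have hsq : ‖u N x‖ ^ 2 ≤ 1 / 4 := by nlinarith [norm_nonneg (u N x)]
  nlinarith [N.cast_nonneg (α := ℝ)]

section WeakHaagerup

variable {G : Type} [Group G]

theorem WeakHaagerupPropertyOne.exists_seq_eventually_norm_sub_one_le [Countable G]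
    (h : WeakHaagerupPropertyOne G)
    {ε : ℕ → ℝ} (hε : ∀ n, 0 < ε n) :
    ∃ u : ℕ → G → ℂ, (∀ n, VanishesAtInfinity (u n)) ∧ (∀ n, u n ∈ herzSchurUnitBall G) ∧
      ∀ g, ∀ᶠ n in atTop, ‖u n g - 1‖ ≤ ε n := by
  classical
  obtain ⟨f, hf⟩ := exists_surjective_nat G
  choose u hu0 hu1 hu2 using fun n => h ((Finset.range (n + 1)).image f) (ε n) (hε n)
  refine ⟨u, hu0, fun n => mem_herzSchurUnitBall_iff.mpr (hu1 n), fun g => ?_⟩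
  obtain ⟨k, rfl⟩ := hf g
  exact eventually_atTop.mpr ⟨k, fun n hn => hu2 n _
    (Finset.mem_image_of_mem f (Finset.mem_range.mpr (Nat.lt_succ_of_le hn)))⟩

theorem exists_proper_of_weakHaagerupPropertyOne [Countable G]
    (h : WeakHaagerupPropertyOne G) :
    ∃ ψ : G → ℝ, (∀ g, 0 ≤ ψ g) ∧ (∀ R : ℝ, {g : G | ψ g ≤ R}.Finite) ∧
      ∀ t : ℝ, 0 < t →
        HasHSFactorization (fun g : G => ((Real.exp (-(t * ψ g)) : ℝ) : ℂ)) 1 := by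
  obtain ⟨u, hu0, hu1, hu2⟩ :=
    h.exists_seq_eventually_norm_sub_one_le (ε := fun n => (1 / 2) ^ n / (2 * (n + 1)))
      fun n => by positivity
  have hle : ∀ n g, ‖u n g‖ ≤ 1 := fun n => herzSchurUnitBall.norm_le_one (hu1 n)
  have hd : ∀ g, Summable fun n : ℕ => ((n : ℝ) + 1) * (1 - ‖u n g‖ ^ 2) := fun g =>
    summable_mul_one_sub_norm_sq (hle · g) (hu2 g)
  refine ⟨fun g => ∑' n : ℕ, ((n : ℝ) + 1) * (1 - ‖u n g‖ ^ 2),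
    fun g => tsum_nonneg fun n => mul_one_sub_norm_sq_nonneg n (hle n g),
    finite_setOf_tsum_mul_one_sub_norm_sq_le hu0 hle hd, fun t ht => ?_⟩
  have hterm : ∀ (n : ℕ) g, ((t * (n + 1) : ℝ) : ℂ) * (1 - ((‖u n g‖ ^ 2 : ℝ) : ℂ)) =
      ((t * ((n + 1) * (1 - ‖u n g‖ ^ 2)) : ℝ) : ℂ) := fun n g => by push_cast; ring
  rw [← mem_herzSchurUnitBall_iff]
  convert herzSchurUnitBall.exp_neg_tsum_mem (fun n => herzSchurUnitBall.norm_sq_mem (hu1 n))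
    (c := fun n => t * (n + 1)) (fun n => by positivity) (fun g => ?_) using 2 with g
  · simp only [hterm, ← Complex.ofReal_tsum, tsum_mul_left, Complex.ofReal_exp,
      Complex.ofReal_neg]
  · simpa only [hterm] using Complex.summable_ofReal.mpr ((hd g).mul_left t)

theorem weakHaagerupPropertyOne_of_proper {ψ : G → ℝ} (hψ : ∀ R : ℝ, {g | ψ g ≤ R}.Finite)
    (hB : ∀ t : ℝ, 0 < t → HasHSFactorization (fun g => ((Real.exp (-(t * ψ g)) : ℝ) : ℂ)) 1) :
    WeakHaagerupPropertyOne G := by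
  intro F ε hε
  have hclose : ∀ᶠ t in 𝓝[>] (0 : ℝ), ∀ g ∈ F,
      ‖((Real.exp (-(t * ψ g)) : ℝ) : ℂ) - 1‖ ≤ ε := by
    refine (eventually_all_finset F).mpr fun g _ => ?_
    have hlim : Tendsto (fun t : ℝ => ((Real.exp (-(t * ψ g)) : ℝ) : ℂ)) (𝓝[>] 0) (𝓝 1) := by
      have := (by fun_prop : Continuous fun t : ℝ => ((Real.exp (-(t * ψ g)) : ℝ) : ℂ)).tendsto 0
      simpa using this.mono_left nhdsWithin_le_nhds
    exact (Metric.tendsto_nhds.mp hlim ε hε).mono fun t ht => by rw [← dist_eq_norm]; exact ht.le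
  obtain ⟨t, hF, ht⟩ := (hclose.and self_mem_nhdsWithin).exists
  exact ⟨_, vanishesAtInfinity_exp_neg_mul hψ ht, hB t ht, hF⟩

end WeakHaagerup

/-- A countable discrete group has the weak Haagerup property with constant 1 iff there is a
proper nonnegative function `ψ` with `‖e^{-tψ}‖_{B₂} ≤ 1` for all `t > 0`. -/
theorem weakHaagerupOne_iff_proper_function (G : Type) [Group G] [Countable G] :
    WeakHaagerupPropertyOne G ↔
      ∃ ψ : G → ℝ, (∀ g, 0 ≤ ψ g) ∧ (∀ R : ℝ, {g : G | ψ g ≤ R}.Finite) ∧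
        ∀ t : ℝ, 0 < t →
          HasHSFactorization (fun g : G => ((Real.exp (-(t * ψ g)) : ℝ) : ℂ)) 1 :=
  ⟨exists_proper_of_weakHaagerupPropertyOne,
    fun ⟨_, _, hψ, hB⟩ => weakHaagerupPropertyOne_of_proper hψ hB⟩
end
end

section
/- Let G be a group and suppose u_n : G → ℂ (n ∈ ℕ) each admit a Hilbert-space factorization with bound ≤ 1, and u_n → u pointwise. Then u admits a Hilbert-space factorization with bound ≤ 1. (The 'unit ball of B₂(G)' is closed under pointwise limits.) -/
noncomputable section

open Filter Topology

/-!
Normalize each factorization to `‖P n x‖ ≤ 1`, `‖Q n y‖ ≤ 1` and merge `P n`, `Q n` into one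
unit-bounded family `R n : G ⊕ G → H n`. Extended linearly to `G ⊕ G →₀ ℂ`, the pulled-back
inner products are bounded, so they converge along a free ultrafilter. The limit is a semi-inner
product, and in its separation quotient the basis vectors form a unit-bounded family whose Gram
kernel is the ultralimit of those of the `R n`; its block `⟪R (inl x), R (inr y)⟫` is therefore
`lim u n (y⁻¹ * x) = v (y⁻¹ * x)`.
-/

theorem HasHSFactorization.exists_left_norm_le_one {G : Type} [Group G] {u : G → ℂ} {C : ℝ}
    (h : HasHSFactorization u C) :
    ∃ (H : Type) (_ : NormedAddCommGroup H) (_ : InnerProductSpace ℂ H) (P Q : G → H),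
      (∀ x, ‖P x‖ ≤ 1) ∧ (∀ y, ‖Q y‖ ≤ C) ∧
      ∀ x y, u (y⁻¹ * x) = (inner ℂ (P x) (Q y) : ℂ) := by
  obtain ⟨H, _, _, P, Q, a, b, hP, hQ, hab, hu⟩ := h
  rcases ((norm_nonneg _).trans (hP 1)).eq_or_lt with rfl | ha
  · refine ⟨H, inferInstance, inferInstance, 0, 0, by simp, by simpa using hab, fun x y => ?_⟩
    simp [hu, norm_le_zero_iff.mp (hP x)]
  · refine ⟨H, inferInstance, inferInstance, fun x => (a⁻¹ : ℂ) • P x, fun y => (a : ℂ) • Q y,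
      fun x => ?_, fun y => ?_, fun x y => ?_⟩
    · calc ‖(a⁻¹ : ℂ) • P x‖ = a⁻¹ * ‖P x‖ := by
            rw [norm_smul, ← Complex.ofReal_inv, Complex.norm_of_nonneg (inv_nonneg.2 ha.le)]
        _ ≤ a⁻¹ * a := by gcongr; exact hP x
        _ = 1 := inv_mul_cancel₀ ha.ne'
    · calc ‖(a : ℂ) • Q y‖ = a * ‖Q y‖ := by rw [norm_smul, Complex.norm_of_nonneg ha.le]
        _ ≤ a * b := by gcongr; exact hQ y
        _ ≤ C := hab
    · rw [inner_smul_left, inner_smul_right, hu, ← mul_assoc, map_inv₀, Complex.conj_ofReal,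
        inv_mul_cancel₀ (by exact_mod_cast ha.ne'), one_mul]

theorem Finsupp.norm_linearCombination_le_sum_norm {𝕜 E ι : Type*} [NormedField 𝕜]
    [SeminormedAddCommGroup E] [NormedSpace 𝕜 E] {v : ι → E} (hv : ∀ i, ‖v i‖ ≤ 1)
    (f : ι →₀ 𝕜) :
    ‖Finsupp.linearCombination 𝕜 v f‖ ≤ ∑ i ∈ f.support, ‖f i‖ := by
  rw [Finsupp.linearCombination_apply, Finsupp.sum]
  refine (norm_sum_le _ _).trans (Finset.sum_le_sum fun i _ => ?_)
  rw [norm_smul]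
  exact mul_le_of_le_one_right (norm_nonneg _) (hv i)

theorem Ultrafilter.exists_tendsto_of_norm_le {N E : Type*} [SeminormedAddCommGroup E]
    [ProperSpace E] (φ : Ultrafilter N) {u : N → E} {M : ℝ} (hu : ∀ n, ‖u n‖ ≤ M) :
    ∃ c, Tendsto u φ (𝓝 c) := by
  obtain ⟨c, -, hc⟩ := (isCompact_closedBall (0 : E) M).ultrafilter_le_nhds' (φ.map u)
    (Ultrafilter.mem_map.2 (univ_mem' fun n => mem_closedBall_zero_iff.2 (hu n)))
  exact ⟨c, hc⟩

abbrev PreInnerProductSpace.Core.ofTendsto {𝕜 F N : Type*} [RCLike 𝕜] [AddCommGroup F]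
    [Module 𝕜 F] {E : N → Type*} [∀ n, SeminormedAddCommGroup (E n)]
    [∀ n, InnerProductSpace 𝕜 (E n)] (l : Filter N) [l.NeBot] (T : ∀ n, F →ₗ[𝕜] E n) (B : F → F → 𝕜)
    (hB : ∀ f g, Tendsto (fun n => inner 𝕜 (T n f) (T n g)) l (𝓝 (B f g))) :
    PreInnerProductSpace.Core 𝕜 F where
  inner := B
  conj_inner_symm f g := tendsto_nhds_unique
    ((((RCLike.continuous_conj (K := 𝕜)).tendsto _).comp (hB g f)).congr fun _ =>
      inner_conj_symm _ _)
    (hB f g)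
  re_inner_nonneg f :=
    ge_of_tendsto' ((RCLike.continuous_re.tendsto _).comp (hB f f)) fun _ => inner_self_nonneg
  add_left f f' g := tendsto_nhds_unique (hB (f + f') g)
    (((hB f g).add (hB f' g)).congr fun n => by rw [map_add, inner_add_left])
  smul_left f g r := tendsto_nhds_unique (hB (r • f) g)
    (((hB f g).const_mul _).congr fun n => by rw [map_smul, inner_smul_left])

theorem PreInnerProductSpace.Core.exists_inner_eq {𝕜 : Type*} [RCLike 𝕜] {F : Type}
    [AddCommGroup F] [Module 𝕜 F] (c : PreInnerProductSpace.Core 𝕜 F) :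
    ∃ (K : Type) (_ : NormedAddCommGroup K) (_ : InnerProductSpace 𝕜 K) (J : F → K),
      ∀ f g, inner 𝕜 (J f) (J g) = c.inner f g := by
  let := InnerProductSpace.Core.toSeminormedAddCommGroup (c := c)
  let := InnerProductSpace.ofCore c
  exact ⟨SeparationQuotient F, inferInstance, inferInstance, SeparationQuotient.mk,
    fun _ _ => rfl⟩

theorem exists_tendsto_inner_of_norm_le_one {𝕜 ι : Type} [RCLike 𝕜] {N : Type*}
    {E : N → Type*} [∀ n, SeminormedAddCommGroup (E n)] [∀ n, InnerProductSpace 𝕜 (E n)]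
    (φ : Ultrafilter N) (R : ∀ n, ι → E n) (hR : ∀ n i, ‖R n i‖ ≤ 1) :
    ∃ (K : Type) (_ : NormedAddCommGroup K) (_ : InnerProductSpace 𝕜 K) (R' : ι → K),
      (∀ i, ‖R' i‖ ≤ 1) ∧
      ∀ i j, Tendsto (fun n => inner 𝕜 (R n i) (R n j)) φ (𝓝 (inner 𝕜 (R' i) (R' j))) := by
  set T : ∀ n, (ι →₀ 𝕜) →ₗ[𝕜] E n := fun n => Finsupp.linearCombination 𝕜 (R n)
  have hT : ∀ n i, T n (Finsupp.single i 1) = R n i := by simp [T]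
  have hlim : ∀ f g, ∃ c, Tendsto (fun n => inner 𝕜 (T n f) (T n g)) φ (𝓝 c) := fun f g =>
    φ.exists_tendsto_of_norm_le fun n => (norm_inner_le_norm _ _).trans
      (mul_le_mul (Finsupp.norm_linearCombination_le_sum_norm (hR n) f)
        (Finsupp.norm_linearCombination_le_sum_norm (hR n) g) (norm_nonneg _)
        (Finset.sum_nonneg fun _ _ => norm_nonneg _))
  choose B hB using hlim
  obtain ⟨K, _, _, J, hJ⟩ :=
    (PreInnerProductSpace.Core.ofTendsto (φ : Filter N) T B hB).exists_inner_eq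
  have hR' : ∀ i j, Tendsto (fun n => inner 𝕜 (R n i) (R n j)) φ
      (𝓝 (inner 𝕜 (J (Finsupp.single i 1)) (J (Finsupp.single j 1)))) := by
    intro i j
    have h := hB (Finsupp.single i 1) (Finsupp.single j 1)
    simp only [hT] at h
    rw [hJ]
    exact h
  refine ⟨K, inferInstance, inferInstance, fun i => J (Finsupp.single i 1), fun i => ?_, hR'⟩
  refine (sq_le_one_iff₀ (norm_nonneg _)).1 ?_
  rw [@norm_sq_eq_re_inner 𝕜]
  refine le_of_tendsto' ((RCLike.continuous_re.tendsto _).comp (hR' i i)) fun n => ?_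
  rw [Function.comp_apply, ← @norm_sq_eq_re_inner 𝕜]
  exact pow_le_one₀ (norm_nonneg _) (hR n i)

/-- The unit ball of `B₂(G)` is closed under pointwise limits. -/
theorem unit_ball_closed_pointwise {G : Type} [Group G] (u : ℕ → G → ℂ) (v : G → ℂ)
    (h : ∀ n, HasHSFactorization (u n) 1)
    (hlim : ∀ g : G, Filter.Tendsto (fun n => u n g) Filter.atTop (nhds (v g))) :
    HasHSFactorization v 1 := by
  choose H _ _ P Q hP hQ hu using fun n => (h n).exists_left_norm_le_one
  obtain ⟨K, _, _, R, hR, hRlim⟩ := exists_tendsto_inner_of_norm_le_one (𝕜 := ℂ)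
    (hyperfilter ℕ) (fun n => Sum.elim (P n) (Q n)) (by rintro n (x | y); exacts [hP n x, hQ n y])
  refine ⟨K, inferInstance, inferInstance, R ∘ Sum.inl, R ∘ Sum.inr, 1, 1, fun x => hR _,
    fun y => hR _, (one_mul 1).le, fun x y => ?_⟩
  have hφ : (hyperfilter ℕ : Filter ℕ) ≤ atTop := Nat.cofinite_eq_atTop ▸ hyperfilter_le_cofinite
  exact tendsto_nhds_unique ((hlim _).mono_left hφ)
    ((hRlim (.inl x) (.inr y)).congr fun n => (hu n x y).symm)
end
end

section
/- Let (M, τ) be a finite von Neumann algebra with faithful normal tracial state τ, and let S, T : M → M be bounded linear maps satisfying ⟨Tx, y⟩_τ = ⟨x, Sy⟩_τ for all x, y ∈ M, where ⟨x,y⟩_τ = τ(y*x). Then for all x ∈ M, ‖Tx‖_τ ≤ max{‖T‖, ‖S‖} · ‖x‖_τ; consequently T extends to a bounded operator on L²(M, τ) of norm at most max{‖T‖, ‖S‖}. -/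
/-!
`⟪a, b⟫ = τ (star a * b)` makes `M` a pre-Hilbert space (Mathlib's `PositiveLinearMap.PreGNS`), in
which `‖a‖₂ ≤ ‖1‖₂ ‖a‖` because left multiplication by `a` has norm at most `‖a‖`. There
`A := S T` is symmetric and `‖T x‖₂² = ⟪A x, x⟫ ≤ ‖A x‖₂ ‖x‖₂`. For a symmetric `A`,
Cauchy–Schwarz gives `‖A x‖₂² ≤ ‖x‖₂ ‖A² x‖₂`; iterating,
`‖A x‖₂ ^ 2ⁿ ≤ ‖x‖₂ ^ (2ⁿ - 1) ‖A ^ 2ⁿ x‖₂ ≤ ‖x‖₂ ^ (2ⁿ - 1) ‖1‖₂ ‖A‖ ^ 2ⁿ ‖x‖`.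
Taking `2ⁿ`-th roots and letting `n → ∞` yields `‖A x‖₂ ≤ ‖A‖ ‖x‖₂`, hence
`‖T x‖₂ ≤ √‖S T‖ ‖x‖₂ ≤ max ‖T‖ ‖S‖ ‖x‖₂`.
-/

open scoped InnerProductSpace ComplexOrder

lemma le_of_forall_pow_two_pow_le_mul {a b L : ℝ} (hb : 0 ≤ b)
    (h : ∀ n : ℕ, a ^ 2 ^ n ≤ L * b ^ 2 ^ n) : a ≤ b := by
  by_contra! hba
  have ha : 0 < a := hb.trans_lt hba
  have hr : Filter.Tendsto (fun n : ℕ => L * (b / a) ^ 2 ^ n) Filter.atTop (nhds 0) := by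
    have h2n : Filter.Tendsto (fun n : ℕ => 2 ^ n) Filter.atTop Filter.atTop :=
      Filter.tendsto_atTop_mono (fun n => n.lt_two_pow_self.le) Filter.tendsto_id
    simpa using ((tendsto_pow_atTop_nhds_zero_of_lt_one (div_nonneg hb ha.le)
      ((div_lt_one ha).2 hba)).comp h2n).const_mul L
  obtain ⟨n, hn⟩ := (hr.eventually (gt_mem_nhds one_pos)).exists
  have := h n
  rw [div_pow, mul_div_assoc', div_lt_one (by positivity)] at hn
  linarith

section InnerProductSpace

variable {𝕜 E : Type*} [RCLike 𝕜] [SeminormedAddCommGroup E] [InnerProductSpace 𝕜 E]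

namespace LinearMap.IsSymmetric

variable {A : E →ₗ[𝕜] E}

lemma norm_apply_sq_le (hA : A.IsSymmetric) (x : E) : ‖A x‖ ^ 2 ≤ ‖x‖ * ‖(A ^ 2) x‖ := by
  rw [norm_sq_eq_re_inner (𝕜 := 𝕜) (A x), hA, pow_two, Module.End.mul_apply]
  exact re_inner_le_norm _ _

lemma norm_apply_pow_two_pow_le (hA : A.IsSymmetric) (x : E) (n : ℕ) :
    ‖A x‖ ^ 2 ^ n ≤ ‖x‖ ^ (2 ^ n - 1) * ‖(A ^ 2 ^ n) x‖ := by
  induction n with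
  | zero => simp
  | succ n ih =>
    have hexp : 2 ^ n * 2 - 1 = 1 + (2 ^ n - 1) * 2 := by
      have := Nat.one_le_two_pow (n := n); omega
    calc ‖A x‖ ^ 2 ^ (n + 1) = (‖A x‖ ^ 2 ^ n) ^ 2 := by rw [pow_succ, pow_mul]
      _ ≤ (‖x‖ ^ (2 ^ n - 1) * ‖(A ^ 2 ^ n) x‖) ^ 2 := by gcongr
      _ = ‖x‖ ^ ((2 ^ n - 1) * 2) * ‖(A ^ 2 ^ n) x‖ ^ 2 := by rw [mul_pow, pow_mul]
      _ ≤ ‖x‖ ^ ((2 ^ n - 1) * 2) * (‖x‖ * ‖((A ^ 2 ^ n) ^ 2) x‖) := by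
        gcongr; exact (hA.pow _).norm_apply_sq_le x
      _ = ‖x‖ ^ (2 ^ (n + 1) - 1) * ‖(A ^ 2 ^ (n + 1)) x‖ := by
        rw [← pow_mul, pow_succ 2 n, hexp, pow_add, pow_one]; ring

lemma norm_apply_le_of_norm_pow_apply_le (hA : A.IsSymmetric) {x : E} {K c : ℝ} (hc : 0 ≤ c)
    (hgrowth : ∀ m : ℕ, ‖(A ^ m) x‖ ≤ K * c ^ m) : ‖A x‖ ≤ c * ‖x‖ := by
  rcases (norm_nonneg x).eq_or_lt with hx | hx
  · have := hA.norm_apply_sq_le x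
    rw [← hx, zero_mul] at this
    rw [← hx, mul_zero]
    nlinarith [norm_nonneg (A x)]
  refine le_of_forall_pow_two_pow_le_mul (L := K / ‖x‖) (by positivity) fun n => ?_
  calc ‖A x‖ ^ 2 ^ n ≤ ‖x‖ ^ (2 ^ n - 1) * ‖(A ^ 2 ^ n) x‖ := hA.norm_apply_pow_two_pow_le x n
    _ ≤ ‖x‖ ^ (2 ^ n - 1) * (K * c ^ 2 ^ n) := by gcongr; exact hgrowth _
    _ = K / ‖x‖ * (c * ‖x‖) ^ 2 ^ n := by
      rw [mul_pow, ← pow_sub_one_mul (pow_ne_zero n two_ne_zero) ‖x‖]; field_simp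

end LinearMap.IsSymmetric

namespace LinearMap

variable {S T : E →ₗ[𝕜] E}

lemma isSymmetric_comp_of_inner_apply_eq (hST : ∀ x y, ⟪y, T x⟫_𝕜 = ⟪S y, x⟫_𝕜) :
    (S ∘ₗ T).IsSymmetric := fun a b => by
  rw [comp_apply, comp_apply, ← hST, ← inner_conj_symm a, ← hST, inner_conj_symm]

lemma norm_apply_le_of_inner_apply_eq (hST : ∀ x y, ⟪y, T x⟫_𝕜 = ⟪S y, x⟫_𝕜) {x : E} {K c : ℝ}
    (hc : 0 ≤ c) (hgrowth : ∀ m : ℕ, ‖((S ∘ₗ T) ^ m) x‖ ≤ K * c ^ m) : ‖T x‖ ≤ √c * ‖x‖ := by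
  have hST_le : ‖(S ∘ₗ T) x‖ ≤ c * ‖x‖ :=
    (isSymmetric_comp_of_inner_apply_eq hST).norm_apply_le_of_norm_pow_apply_le hc hgrowth
  have hsq : ‖T x‖ ^ 2 ≤ c * ‖x‖ ^ 2 :=
    calc ‖T x‖ ^ 2 = RCLike.re ⟪(S ∘ₗ T) x, x⟫_𝕜 := by
          rw [norm_sq_eq_re_inner (𝕜 := 𝕜), comp_apply, ← hST]
      _ ≤ ‖(S ∘ₗ T) x‖ * ‖x‖ := re_inner_le_norm _ _
      _ ≤ c * ‖x‖ ^ 2 := by rw [sq, ← mul_assoc]; gcongr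
  rw [← Real.sqrt_sq (norm_nonneg (T x)), ← Real.sqrt_sq (norm_nonneg x), ← Real.sqrt_mul hc]
  exact Real.sqrt_le_sqrt hsq

end LinearMap

end InnerProductSpace

def PositiveLinearMap.ofStarMulSelfNonneg {R A E : Type*} [Semiring R] [NonUnitalRing A]
    [PartialOrder A] [StarRing A] [StarOrderedRing A] [Module R A] [AddCommGroup E]
    [PartialOrder E] [IsOrderedAddMonoid E] [Module R E] (f : A →ₗ[R] E)
    (hf : ∀ a, 0 ≤ f (star a * a)) : A →ₚ[R] E :=
  mk₀ f fun a ha => by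
    rw [StarOrderedRing.nonneg_iff] at ha
    induction ha using AddSubmonoid.closure_induction with
    | mem a ha => obtain ⟨s, rfl⟩ := ha; exact hf s
    | zero => simp
    | add a b _ _ ha hb => simpa using add_nonneg ha hb

lemma ContinuousLinearMap.norm_pow_apply_le {𝕜 F : Type*} [NontriviallyNormedField 𝕜]
    [SeminormedAddCommGroup F] [NormedSpace 𝕜 F] (A : F →L[𝕜] F) (n : ℕ) (x : F) :
    ‖(A ^ n) x‖ ≤ ‖A‖ ^ n * ‖x‖ := by
  rcases n with _ | n
  · simp
  · exact (A ^ (n + 1)).le_opNorm x |>.trans (by gcongr; exact norm_pow_le' A n.succ_pos)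

namespace PositiveLinearMap

variable {A : Type*} [CStarAlgebra A] [PartialOrder A] [StarOrderedRing A] (f : A →ₚ[ℂ] ℂ)

lemma norm_toPreGNS_le (a : A) : ‖f.toPreGNS a‖ ≤ ‖f.toPreGNS 1‖ * ‖a‖ :=
  calc ‖f.toPreGNS a‖ = ‖f.leftMulMapPreGNS a (f.toPreGNS 1)‖ := by simp
    _ ≤ ‖f.leftMulMapPreGNS a‖ * ‖f.toPreGNS 1‖ := ContinuousLinearMap.le_opNorm _ _
    _ ≤ ‖f.toPreGNS 1‖ * ‖a‖ := by
      rw [mul_comm]; gcongr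
      exact LinearMap.mkContinuous_norm_le _ (norm_nonneg a) _

lemma norm_toPreGNS_apply_le {S T : A →L[ℂ] A}
    (hST : ∀ x y, f (star y * T x) = f (star (S y) * x)) (x : A) :
    ‖f.toPreGNS (T x)‖ ≤ √‖S ∘L T‖ * ‖f.toPreGNS x‖ := by
  set e := f.toPreGNS
  have hcomp : e.conjRingEquiv S ∘ₗ e.conjRingEquiv T = e.conjRingEquiv (S ∘L T).toLinearMap :=
    rfl
  refine LinearMap.norm_apply_le_of_inner_apply_eq (S := e.conjRingEquiv S)
    (T := e.conjRingEquiv T) (x := e x) hST (K := ‖e 1‖ * ‖x‖) (norm_nonneg _) fun m => ?_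
  rw [hcomp, ← map_pow, ← ContinuousLinearMap.toLinearMap_pow]
  calc ‖e (((S ∘L T) ^ m) x)‖ ≤ ‖e 1‖ * ‖((S ∘L T) ^ m) x‖ := f.norm_toPreGNS_le _
    _ ≤ ‖e 1‖ * (‖S ∘L T‖ ^ m * ‖x‖) := by
      gcongr; exact (S ∘L T).norm_pow_apply_le m x
    _ = ‖e 1‖ * ‖x‖ * ‖S ∘L T‖ ^ m := by ring

end PositiveLinearMap

theorem trace_two_norm_bound_general {M : Type} [CStarAlgebra M]
    (τ : M →ₗ[ℂ] ℂ)
    (hpos : ∀ x : M, 0 ≤ (τ (star x * x)).re ∧ (τ (star x * x)).im = 0)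
    (S T : M →L[ℂ] M)
    (hadj : ∀ x y : M, τ (star y * T x) = τ (star (S y) * x)) :
    ∀ x : M, Real.sqrt (τ (star (T x) * T x)).re
      ≤ max ‖T‖ ‖S‖ * Real.sqrt (τ (star x * x)).re := by
  let := CStarAlgebra.spectralOrder M
  have := CStarAlgebra.spectralOrderedRing M
  let f := PositiveLinearMap.ofStarMulSelfNonneg τ fun a =>
    Complex.nonneg_iff.2 ⟨(hpos a).1, (hpos a).2.symm⟩
  have hsqrt_le : √‖S ∘L T‖ ≤ max ‖T‖ ‖S‖ := by
    rw [Real.sqrt_le_left (by positivity), sq]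
    exact (S.opNorm_comp_le T).trans (mul_le_mul (le_max_right _ _) (le_max_left _ _)
      (norm_nonneg T) (by positivity))
  intro x
  calc √(τ (star (T x) * T x)).re ≤ √‖S ∘L T‖ * √(τ (star x * x)).re :=
        f.norm_toPreGNS_apply_le hadj x
    _ ≤ max ‖T‖ ‖S‖ * √(τ (star x * x)).re := by gcongr

/-- If bounded maps `S, T` on a C*-algebra with faithful tracial state `τ` are mutually
adjoint with respect to `⟨x,y⟩_τ = τ(y*x)`, then `T` is bounded for the trace 2-norm with
bound `max ‖T‖ ‖S‖`; consequently `T` extends to `L²(M,τ)`. -/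
theorem trace_two_norm_bound {M : Type} [CStarAlgebra M]
    (τ : M →ₗ[ℂ] ℂ) (hτ1 : τ 1 = 1)
    (htrace : ∀ x y : M, τ (x * y) = τ (y * x))
    (hpos : ∀ x : M, 0 ≤ (τ (star x * x)).re ∧ (τ (star x * x)).im = 0)
    (hfaithful : ∀ x : M, τ (star x * x) = 0 → x = 0)
    (S T : M →L[ℂ] M)
    (hadj : ∀ x y : M, τ (star y * T x) = τ (star (S y) * x)) :
    ∀ x : M, Real.sqrt (τ (star (T x) * T x)).re
      ≤ max ‖T‖ ‖S‖ * Real.sqrt (τ (star x * x)).re :=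
  trace_two_norm_bound_general τ hpos S T hadj
end

section
/- Let G be a group acting on a probability space (X, μ) by measure-preserving transformations, let H be a group, and let α : G × X → H be a cocycle: α(gh, x) = α(g, hx)·α(h, x) for all g,h ∈ G and almost all x ∈ X. Suppose u : H → ℂ admits a Hilbert-space factorization u(b⁻¹a) = ⟨P(a),Q(b)⟩ with (sup‖P‖)(sup‖Q‖) ≤ C and P, Q measurable (e.g. X, H countable/discrete). Define û(g) = ∫_X u(α(g,x)) dμ(x). Then û admits a Hilbert-space factorization over G with bound ≤ C, witnessed in the Hilbert space L²(X, μ; 𝓗) via P̃(g)(x) = P(α(g,x)) and Q̃(g)(x) = Q(α(g,x)). -/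
/-! Twisting the cocycle to `β g x = α g (g⁻¹ • x)`, the cocycle identity gives
`(β h x)⁻¹ * β g x = α (h⁻¹ * g) (g⁻¹ • x)` pointwise, so `u (α (h⁻¹ * g) (g⁻¹ • x))` is the
pointwise inner product of `P ∘ β g` and `Q ∘ β h`. Integrating over `x` and using invariance of
`μ` under `g⁻¹`, `û (h⁻¹ * g)` is the inner product of these two functions in `L²(X, μ; 𝓗)`, whose
norms are bounded by the sup-norms of `P` and `Q` because `μ` is a probability measure. -/

noncomputable section

open MeasureTheory

theorem cocycle_twist_inv_mul {G H X : Type} [Group G] [Group H] [MulAction G X]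
    {α : G → X → H} (hcoc : ∀ (g h : G) (x : X), α (g * h) x = α g (h • x) * α h x)
    (g h : G) (x : X) :
    α (h⁻¹ * g) (g⁻¹ • x) = (α h (h⁻¹ • x))⁻¹ * α g (g⁻¹ • x) := by
  have hsplit := hcoc h (h⁻¹ * g) (g⁻¹ • x)
  rw [mul_inv_cancel_left, smul_smul, mul_inv_cancel_right] at hsplit
  rw [hsplit, inv_mul_cancel_left]

section L2

variable {X E : Type} [MeasurableSpace X] {μ : Measure X} [NormedAddCommGroup E]

theorem MeasureTheory.MemLp.norm_toLp_le_of_ae_bound [IsProbabilityMeasure μ] {p : ENNReal} {f : X → E}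
    (hf : MemLp f p μ) {a : ℝ} (hbound : ∀ᵐ x ∂μ, ‖f x‖ ≤ a) : ‖hf.toLp f‖ ≤ a := by
  obtain ⟨x, hx⟩ := hbound.exists
  have hle := Lp.norm_le_of_ae_bound ((norm_nonneg _).trans hx)
    (hf.coeFn_toLp.mp (hbound.mono fun x hx hfx => hfx ▸ hx))
  simpa [measureUnivNNReal, measure_univ] using hle

variable [InnerProductSpace ℂ E]

theorem MeasureTheory.MemLp.inner_toLp_toLp {f g : X → E} (hf : MemLp f 2 μ) (hg : MemLp g 2 μ) :
    inner ℂ (hf.toLp f) (hg.toLp g) = ∫ x, inner ℂ (f x) (g x) ∂μ := by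
  rw [L2.inner_def]
  refine integral_congr_ae ?_
  filter_upwards [hf.coeFn_toLp, hg.coeFn_toLp] with x hfx hgx
  rw [hfx, hgx]

theorem hasHSFactorization_of_eq_integral_inner {G : Type} [Group G] [IsProbabilityMeasure μ]
    (P Q : G → X → E) {a b C : ℝ}
    (hPm : ∀ g, AEStronglyMeasurable (P g) μ) (hQm : ∀ g, AEStronglyMeasurable (Q g) μ)
    (hP : ∀ g, ∀ᵐ x ∂μ, ‖P g x‖ ≤ a) (hQ : ∀ g, ∀ᵐ x ∂μ, ‖Q g x‖ ≤ b) (hab : a * b ≤ C)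
    (v : G → ℂ) (hv : ∀ g h, v (h⁻¹ * g) = ∫ x, inner ℂ (P g x) (Q h x) ∂μ) :
    HasHSFactorization v C := by
  have hPL (g : G) : MemLp (P g) 2 μ := .of_bound (hPm g) a (hP g)
  have hQL (g : G) : MemLp (Q g) 2 μ := .of_bound (hQm g) b (hQ g)
  refine ⟨Lp E 2 μ, inferInstance, inferInstance, fun g => (hPL g).toLp, fun g => (hQL g).toLp,
    a, b, fun g => (hPL g).norm_toLp_le_of_ae_bound (hP g),
    fun g => (hQL g).norm_toLp_le_of_ae_bound (hQ g), hab, fun g h => ?_⟩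
  rw [hv, MemLp.inner_toLp_toLp]

end L2

/-- Inducing a multiplier through a cocycle `α : G × X → H` over a measure-preserving
action on a probability space: `û(g) = ∫_X u(α(g,x)) dμ(x)` has a Hilbert-space
factorization over `G` with the same bound. -/
theorem cocycle_induced_factorization {G : Type} [Group G] {H : Type} [Group H]
    {X : Type} [Countable X] [MeasurableSpace X] [MeasurableSingletonClass X]
    [MulAction G X]
    (μ : Measure X) [IsProbabilityMeasure μ]
    (hinv : ∀ g : G, MeasurePreserving (fun x : X => g • x) μ μ)
    (α : G → X → H)
    (hcoc : ∀ (g h : G) (x : X), α (g * h) x = α g (h • x) * α h x)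
    (u : H → ℂ) (C : ℝ) (hu : HasHSFactorization u C) :
    HasHSFactorization (fun g : G => ∫ x, u (α g x) ∂μ) C := by
  obtain ⟨E, _, _, P, Q, a, b, hP, hQ, hab, hfac⟩ := hu
  refine hasHSFactorization_of_eq_integral_inner (μ := μ)
    (fun g x => P (α g (g⁻¹ • x))) (fun g x => Q (α g (g⁻¹ • x)))
    (fun _ => .of_discrete) (fun _ => .of_discrete)
    (fun _ => .of_forall fun _ => hP _) (fun _ => .of_forall fun _ => hQ _) hab _ fun g h => ?_
  have hshift : ∫ x, u (α (h⁻¹ * g) x) ∂μ = ∫ x, u (α (h⁻¹ * g) (g⁻¹ • x)) ∂μ := by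
    conv_lhs => rw [← (hinv g⁻¹).map_eq]
    exact integral_map Measurable.of_discrete.aemeasurable .of_discrete
  simp only [hshift, cocycle_twist_inv_mul hcoc, hfac]
end
end
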